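/- If γ and μ are weak compositions of n and there exists a semi-skyline augmented filling of shape γ and content μ, then for every m ≥ 1 we have Σ_{i≥m} μ_i ≤ Σ_{i≥m} γ_i (i.e., μ ≤ γ in reverse dominance order). -/
import Mathlib


/-- Indicator `I(x,y) = 1` if `x > y`, else `0`. -/
def ind (x y : ℕ) : ℤ := if y < x then 1 else 0

/-- A semi-skyline augmented filling (SSAF) of a weak composition.
Columns are indexed by positive integers (column 0 is unused and empty);
`shape i` is the number of non-basement cells of column `i`; `entry i j`
is the entry in column `i`, row `j`, with row `0` the basement (entry `i`),
and `entry i j = 0` for cells outside the augmented diagram. -/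
structure SSAF where
  shape : ℕ → ℕ
  entry : ℕ → ℕ → ℕ
  shape_zero : shape 0 = 0
  support : ∃ N, ∀ i, N ≤ i → shape i = 0
  basement : ∀ i, entry i 0 = i
  pos : ∀ i j, 1 ≤ j → j ≤ shape i → 1 ≤ entry i j
  zero_outside : ∀ i j, shape i < j → entry i j = 0
  noDescent : ∀ i j, j + 1 ≤ shape i → entry i (j + 1) ≤ entry i j
  typeA : ∀ i1 i2 j, i1 < i2 → shape i2 ≤ shape i1 → 1 ≤ j → j ≤ shape i2 →
    ind (entry i1 j) (entry i2 j) + ind (entry i2 j) (entry i1 (j - 1))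
      - ind (entry i1 j) (entry i1 (j - 1)) = 1
  typeB : ∀ i1 i2 j, i1 < i2 → shape i1 < shape i2 → j ≤ shape i1 → j + 1 ≤ shape i2 →
    ind (entry i2 (j + 1)) (entry i1 j) + ind (entry i1 j) (entry i2 j)
      - ind (entry i2 (j + 1)) (entry i2 j) = 1

/-- The number of (non-basement) cells of `F` carrying the entry `v`. -/
noncomputable def SSAF.count (F : SSAF) (v : ℕ) : ℕ :=
  Set.ncard {c : ℕ × ℕ | 1 ≤ c.2 ∧ c.2 ≤ F.shape c.1 ∧ F.entry c.1 c.2 = v}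


lemma SSAF.entry_le (F : SSAF) (i j : ℕ) (hj : j ≤ F.shape i) : F.entry i j ≤ i := by
  induction j with
  | zero => simp [F.basement]
  | succ k ih =>
    exact le_trans (F.noDescent i k hj) (ih (le_trans (Nat.le_succ k) hj))

/-- If there is a semi-skyline augmented filling of shape `γ` and
content `μ` (where `μ v` is the number of entries equal to `v`), then `μ ≤ γ` in the
reverse dominance order: for every `m ≥ 1`, `Σ_{i ≥ m} μ_i ≤ Σ_{i ≥ m} γ_i`.
Here `N` is any common bound for the support of the shape and for the entries. -/
theorem content_le_shape_reverse_dominance (F : SSAF) (m N : ℕ) (hm : 1 ≤ m)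
    (hshape : ∀ i, N < i → F.shape i = 0)
    (hent : ∀ i j, 1 ≤ j → j ≤ F.shape i → F.entry i j ≤ N) :
    ∑ v ∈ Finset.Icc m N, F.count v ≤ ∑ i ∈ Finset.Icc m N, F.shape i := by
  classical
  set B : Finset (ℕ × ℕ) :=
    (Finset.Icc m N).biUnion (fun i => {i} ×ˢ Finset.Icc 1 (F.shape i)) with hB
  have hcount : ∀ v ∈ Finset.Icc m N,
      F.count v = (B.filter (fun c => F.entry c.1 c.2 = v)).card := by
    intro v hv
    rw [Finset.mem_Icc] at hv
    have : {c : ℕ × ℕ | 1 ≤ c.2 ∧ c.2 ≤ F.shape c.1 ∧ F.entry c.1 c.2 = v}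
        = ↑(B.filter (fun c => F.entry c.1 c.2 = v)) := by
      ext ⟨i, j⟩
      simp only [Set.mem_setOf_eq, Finset.coe_filter, Finset.mem_biUnion,
        Finset.mem_Icc, Finset.mem_product, Finset.mem_singleton, hB]
      constructor
      · rintro ⟨h1, h2, h3⟩
        have hvi : v ≤ i := h3 ▸ F.entry_le i j h2
        have hiN : i ≤ N := by
          by_contra h
          have := hshape i (lt_of_not_ge h)
          omega
        exact ⟨⟨i, ⟨le_trans hv.1 hvi, hiN⟩, rfl, h1, h2⟩, h3⟩
      · rintro ⟨⟨i', hi', rfl, h1, h2⟩, h3⟩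
        exact ⟨h1, h2, h3⟩
    rw [SSAF.count, this, Set.ncard_coe_finset]
  rw [Finset.sum_congr rfl hcount]
  have hBcard : B.card = ∑ i ∈ Finset.Icc m N, F.shape i := by
    rw [hB, Finset.card_biUnion]
    · apply Finset.sum_congr rfl
      intro i _
      simp [Nat.card_Icc]
    · intro a _ b _ hab
      simp only [Finset.disjoint_left, Finset.mem_product, Finset.mem_singleton]
      rintro ⟨x, y⟩ ⟨rfl, -⟩ ⟨rfl, -⟩
      exact hab rfl
  calc ∑ v ∈ Finset.Icc m N, (B.filter (fun c => F.entry c.1 c.2 = v)).card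
      ≤ B.card := by
        rw [← Finset.card_biUnion]
        · exact Finset.card_le_card (Finset.biUnion_subset.2
            (fun v _ => Finset.filter_subset _ _))
        · intro a _ b _ hab
          simp only [Finset.disjoint_left, Finset.mem_filter]
          rintro c ⟨-, h1⟩ ⟨-, h2⟩
          exact hab (h1.symm.trans h2)
    _ = ∑ i ∈ Finset.Icc m N, F.shape i := hBcard
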